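/- Let X, Y be Hilbert spaces, A ∈ B(X,Y), and T ⊆ X, S ⊆ Y closed subspaces such that G = A_{T,S}^{(2)} exists. If S' is a closed subspace of Y with δ̂(S,S') < 1/(2 + ‖A‖·‖G‖), then the outer inverse A_{T,S'}^{(2)} exists, equals P_T(I_X + G(P_{S'^⊥} − P_{S^⊥})AP_T)^{-1} G P_{S'^⊥}, and satisfies ‖A_{T,S'}^{(2)}‖ ≤ ‖G‖/(1 − ‖G‖·‖A‖·δ̂(S,S')). -/

import Mathlib

/-!
Write `P = P_T`, `Q = P_{S^⊥}`, `Q' = P_{S'^⊥}` and `D = G (Q' - Q) A P`. Since `ker G = S` we have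
`G Q = G`, and since `G A` is the identity on `T`, `1 + D` agrees with `G Q' A` on `T`; hence whenever
`1 + D` is invertible, `P (1 + D)⁻¹ G Q'` is an outer inverse of `A` with range `T`, and its kernel is
`S'` as soon as `S ∩ S'^⊥ = 0`. Splitting `P_S - P_{S'}` into the orthogonal pieces `P_S P_{S'^⊥}` and
`P_{S^⊥} P_{S'}` gives `‖Q' - Q‖ = ‖P_S - P_{S'}‖ ≤ δ̂(S, S')`, so `‖D‖ ≤ ‖G‖ ‖A‖ δ̂ < 1` and the
Neumann series bounds `‖(1 + D)⁻¹‖` by `(1 - ‖G‖ ‖A‖ δ̂)⁻¹`. Finally `δ(S, S') < 1` forces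
`S ∩ S'^⊥ = 0`.
-/

noncomputable section

open ContinuousLinearMap

/-- δ(M,N) = sup{dist(x,N) : x ∈ M, ‖x‖ = 1}, with sSup ∅ = 0 covering M = {0}. -/
def gapDelta {H : Type*} [NormedAddCommGroup H] (M N : Set H) : ℝ :=
  sSup ((fun x => Metric.infDist x N) '' {x | x ∈ M ∧ ‖x‖ = 1})

/-- The gap δ̂(M,N) = max{δ(M,N), δ(N,M)}. -/
def gapHat {H : Type*} [NormedAddCommGroup H] (M N : Set H) : ℝ :=
  max (gapDelta M N) (gapDelta N M)

/-- Orthogonal projection onto a closed subspace, as an operator H →L[ℂ] H. -/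
def projCLM {H : Type*} [NormedAddCommGroup H] [InnerProductSpace ℂ H] [CompleteSpace H]
    (K : Submodule ℂ H) (hK : IsClosed (K : Set H)) : H →L[ℂ] H :=
  haveI := hK.completeSpace_coe
  K.subtypeL.comp K.orthogonalProjectionOnto

/-- G is the outer inverse A_{T,S}^{(2)}: GAG = G, R(G) = T, N(G) = S. -/
def IsOuterInv {X Y : Type*} [NormedAddCommGroup X] [NormedSpace ℂ X]
    [NormedAddCommGroup Y] [NormedSpace ℂ Y]
    (A : X →L[ℂ] Y) (T : Submodule ℂ X) (S : Submodule ℂ Y) (G : Y →L[ℂ] X) : Prop :=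
  G ∘L (A ∘L G) = G ∧ LinearMap.range (G : Y →ₗ[ℂ] X) = T ∧ LinearMap.ker (G : Y →ₗ[ℂ] X) = S

/-- B is the Moore–Penrose inverse of A. -/
def IsMPInv {X Y : Type*} [NormedAddCommGroup X] [InnerProductSpace ℂ X] [CompleteSpace X]
    [NormedAddCommGroup Y] [InnerProductSpace ℂ Y] [CompleteSpace Y]
    (A : X →L[ℂ] Y) (B : Y →L[ℂ] X) : Prop :=
  A ∘L (B ∘L A) = A ∧ B ∘L (A ∘L B) = B ∧
  adjoint (A ∘L B) = A ∘L B ∧ adjoint (B ∘L A) = B ∘L A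

theorem projCLM_eq_starProjection {H : Type*} [NormedAddCommGroup H] [InnerProductSpace ℂ H]
    [CompleteSpace H] (K : Submodule ℂ H) [K.HasOrthogonalProjection] (hK : IsClosed (K : Set H)) :
    projCLM K hK = K.starProjection :=
  rfl

section Gap

variable {H : Type*} [NormedAddCommGroup H]

theorem gapDelta_nonneg (M N : Set H) : 0 ≤ gapDelta M N :=
  Real.sSup_nonneg <| by
    rintro _ ⟨x, -, rfl⟩
    exact Metric.infDist_nonneg

variable {𝕜 : Type*} [RCLike 𝕜] [InnerProductSpace 𝕜 H] {M N : Submodule 𝕜 H}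

theorem infDist_le_gapDelta {x : H} (hx : x ∈ M) (hx1 : ‖x‖ = 1) :
    Metric.infDist x N ≤ gapDelta (M : Set H) N := by
  refine le_csSup ⟨1, ?_⟩ ⟨x, ⟨hx, hx1⟩, rfl⟩
  rintro _ ⟨y, ⟨-, hy1⟩, rfl⟩
  simpa [hy1] using Metric.infDist_le_dist_of_mem (x := y) N.zero_mem

theorem norm_sub_starProjection_eq_infDist [N.HasOrthogonalProjection] (x : H) :
    ‖x - N.starProjection x‖ = Metric.infDist x N := by
  simp [Metric.infDist_eq_iInf, Submodule.starProjection_minimal, dist_eq_norm]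

theorem norm_starProjection_orthogonal_apply_le [N.HasOrthogonalProjection] {x : H} (hx : x ∈ M) :
    ‖Nᗮ.starProjection x‖ ≤ gapDelta (M : Set H) N * ‖x‖ := by
  rcases eq_or_ne x 0 with rfl | hx0
  · simp
  set u : H := (‖x‖⁻¹ : 𝕜) • x
  have hu : ‖Nᗮ.starProjection u‖ ≤ gapDelta (M : Set H) N := by
    rw [Submodule.starProjection_orthogonal_val, norm_sub_starProjection_eq_infDist]
    exact infDist_le_gapDelta (M.smul_mem _ hx) (norm_smul_inv_norm hx0)
  calc ‖Nᗮ.starProjection x‖ = ‖Nᗮ.starProjection u‖ * ‖x‖ := by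
        simp only [u, map_smul, norm_smul, norm_inv, RCLike.norm_ofReal, abs_norm]
        field_simp [norm_ne_zero_iff.2 hx0]
    _ ≤ gapDelta (M : Set H) N * ‖x‖ := by gcongr

theorem norm_starProjection_orthogonal_comp_le_gapDelta [M.HasOrthogonalProjection]
    [N.HasOrthogonalProjection] :
    ‖Nᗮ.starProjection ∘L M.starProjection‖ ≤ gapDelta (M : Set H) N :=
  opNorm_le_bound _ (gapDelta_nonneg _ _) fun x =>
    (norm_starProjection_orthogonal_apply_le (M.starProjection_apply_mem x)).trans <| by
      gcongr
      · exact gapDelta_nonneg _ _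
      · exact M.norm_starProjection_apply_le x

theorem eq_zero_of_gapDelta_lt_one [N.HasOrthogonalProjection] (hMN : gapDelta (M : Set H) N < 1)
    {x : H} (hxM : x ∈ M) (hxN : x ∈ Nᗮ) : x = 0 := by
  have h := norm_starProjection_orthogonal_apply_le (N := N) hxM
  rw [Submodule.starProjection_eq_self_iff.mpr hxN] at h
  exact norm_le_zero_iff.mp (by nlinarith [norm_nonneg x])

variable [CompleteSpace H] [M.HasOrthogonalProjection] [N.HasOrthogonalProjection]

theorem norm_starProjection_comp_starProjection_orthogonal_le_gapDelta :
    ‖M.starProjection ∘L Nᗮ.starProjection‖ ≤ gapDelta (M : Set H) N := by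
  have h : M.starProjection ∘L Nᗮ.starProjection =
      adjoint (Nᗮ.starProjection ∘L M.starProjection) := by
    rw [adjoint_comp, (isSelfAdjoint_starProjection M).adjoint_eq,
      (isSelfAdjoint_starProjection Nᗮ).adjoint_eq]
  rw [h, LinearIsometryEquiv.norm_map]
  exact norm_starProjection_orthogonal_comp_le_gapDelta

theorem norm_starProjection_sub_le_gapHat :
    ‖M.starProjection - N.starProjection‖ ≤ gapHat (M : Set H) N := by
  set δ := gapHat (M : Set H) N
  refine opNorm_le_bound _ (le_max_of_le_left (gapDelta_nonneg _ _)) fun x => ?_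
  set v := N.starProjection x
  set w := Nᗮ.starProjection x
  set a := M.starProjection w
  set b := Mᗮ.starProjection v
  have hsplit : (M.starProjection - N.starProjection) x = a - b := by
    simp only [a, b, v, w, Submodule.starProjection_orthogonal_val, sub_apply, map_sub]
    abel
  have hab : ‖a - b‖ ^ 2 = ‖a‖ ^ 2 + ‖b‖ ^ 2 := by
    have hinner : inner 𝕜 a b = 0 := Submodule.inner_right_of_mem_orthogonal
      (M.starProjection_apply_mem w) (Mᗮ.starProjection_apply_mem v)
    simp [norm_sub_sq (𝕜 := 𝕜), hinner]
  have ha : ‖a‖ ≤ δ * ‖w‖ := by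
    have hw : Nᗮ.starProjection w = w :=
      Submodule.starProjection_eq_self_iff.mpr (Nᗮ.starProjection_apply_mem x)
    calc ‖a‖ = ‖(M.starProjection ∘L Nᗮ.starProjection) w‖ := by rw [comp_apply, hw]
      _ ≤ gapDelta (M : Set H) N * ‖w‖ :=
        le_of_opNorm_le _ norm_starProjection_comp_starProjection_orthogonal_le_gapDelta w
      _ ≤ δ * ‖w‖ := by gcongr; exact le_max_left _ _
  have hb : ‖b‖ ≤ δ * ‖v‖ :=
    (norm_starProjection_orthogonal_apply_le (N.starProjection_apply_mem x)).trans <| by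
      gcongr; exact le_max_right _ _
  have hsq : ‖(M.starProjection - N.starProjection) x‖ ^ 2 ≤ (δ * ‖x‖) ^ 2 := by
    rw [hsplit, hab, mul_pow, Submodule.norm_sq_eq_add_norm_sq_starProjection x N]
    nlinarith [pow_le_pow_left₀ (norm_nonneg a) ha 2, pow_le_pow_left₀ (norm_nonneg b) hb 2]
  exact le_of_pow_le_pow_left₀ two_ne_zero
    (mul_nonneg (le_max_of_le_left (gapDelta_nonneg _ _)) (norm_nonneg x)) hsq

end Gap

section NormBounds

variable {𝕜 X Y : Type*} [NontriviallyNormedField 𝕜] [NormedAddCommGroup X] [NormedSpace 𝕜 X]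
  [NormedAddCommGroup Y] [NormedSpace 𝕜 Y]

theorem norm_ringInverse_one_add_le [CompleteSpace X] {D : X →L[𝕜] X} (hD : ‖D‖ < 1) :
    ‖Ring.inverse (1 + D)‖ ≤ (1 - ‖D‖)⁻¹ := by
  have hD' : ‖-D‖ < 1 := by rwa [norm_neg]
  have h := tsum_geometric_le_of_norm_lt_one (-D) hD'
  rw [geom_series_eq_inverse _ hD', sub_neg_eq_add, norm_neg] at h
  have h1 : ‖(1 : X →L[𝕜] X)‖ ≤ 1 := norm_id_le
  linarith

variable {A : X →L[𝕜] Y} {G : Y →L[𝕜] X} {P : X →L[𝕜] X} {Q Q' : Y →L[𝕜] Y} {δ : ℝ}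

theorem norm_comp_sub_comp_le (hP : ‖P‖ ≤ 1) (hQ : ‖Q' - Q‖ ≤ δ) :
    ‖G ∘L ((Q' - Q) ∘L (A ∘L P))‖ ≤ ‖G‖ * ‖A‖ * δ := calc
  ‖G ∘L ((Q' - Q) ∘L (A ∘L P))‖ ≤ ‖G‖ * (‖Q' - Q‖ * (‖A‖ * ‖P‖)) := by
    refine (opNorm_comp_le _ _).trans ?_
    gcongr
    exact (opNorm_comp_le _ _).trans (by gcongr; exact opNorm_comp_le _ _)
  _ ≤ ‖G‖ * (δ * (‖A‖ * 1)) := by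
    gcongr
    exact (norm_nonneg _).trans hQ
  _ = ‖G‖ * ‖A‖ * δ := by ring

theorem norm_comp_ringInverse_comp_le [CompleteSpace X] (hP : ‖P‖ ≤ 1) (hQ' : ‖Q'‖ ≤ 1)
    (hQ : ‖Q' - Q‖ ≤ δ) (hδ : ‖G‖ * ‖A‖ * δ < 1) :
    ‖P ∘L (Ring.inverse (1 + G ∘L ((Q' - Q) ∘L (A ∘L P))) ∘L (G ∘L Q'))‖ ≤
      ‖G‖ / (1 - ‖G‖ * ‖A‖ * δ) := by
  have hD := norm_comp_sub_comp_le (G := G) (A := A) hP hQ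
  calc _ ≤ ‖P‖ * (‖Ring.inverse (1 + G ∘L ((Q' - Q) ∘L (A ∘L P)))‖ * (‖G‖ * ‖Q'‖)) := by
        refine (opNorm_comp_le _ _).trans ?_
        gcongr
        exact (opNorm_comp_le _ _).trans (by gcongr; exact opNorm_comp_le _ _)
    _ ≤ 1 * ((1 - ‖G‖ * ‖A‖ * δ)⁻¹ * (‖G‖ * 1)) := by
        gcongr
        exact (norm_ringInverse_one_add_le (hD.trans_lt hδ)).trans (by gcongr)
    _ = ‖G‖ / (1 - ‖G‖ * ‖A‖ * δ) := by ring

end NormBounds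

namespace IsOuterInv

variable {X Y : Type*} [NormedAddCommGroup X] [NormedSpace ℂ X] [NormedAddCommGroup Y]
  [NormedSpace ℂ Y] {A : X →L[ℂ] Y} {T : Submodule ℂ X} {S : Submodule ℂ Y} {G : Y →L[ℂ] X}

theorem apply_mem (hG : IsOuterInv A T S G) (y : Y) : G y ∈ T :=
  hG.2.1 ▸ LinearMap.mem_range_self _ y

theorem apply_eq_zero_iff (hG : IsOuterInv A T S G) {y : Y} : G y = 0 ↔ y ∈ S := by
  rw [← hG.2.2]
  rfl

theorem apply_apply_of_mem (hG : IsOuterInv A T S G) {x : X} (hx : x ∈ T) : G (A x) = x := by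
  obtain ⟨y, rfl⟩ := LinearMap.mem_range.mp (hG.2.1 ▸ hx)
  exact DFunLike.congr_fun hG.1 y

theorem perturb_kernel (hG : IsOuterInv A T S G) {S' : Submodule ℂ Y} {P : X →L[ℂ] X}
    {Q Q' : Y →L[ℂ] Y} (hPT : ∀ x, P x ∈ T) (hP : ∀ x ∈ T, P x = x) (hGQ : G ∘L Q = G)
    (hQ' : LinearMap.ker (Q' : Y →ₗ[ℂ] Y) = S') (hSQ' : ∀ y, Q' y ∈ S → Q' y = 0)
    (hunit : IsUnit (1 + G ∘L ((Q' - Q) ∘L (A ∘L P)))) :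
    IsOuterInv A T S' (P ∘L (Ring.inverse (1 + G ∘L ((Q' - Q) ∘L (A ∘L P))) ∘L (G ∘L Q'))) := by
  set D := G ∘L ((Q' - Q) ∘L (A ∘L P))
  set B := Ring.inverse (1 + D)
  have hB_left (x : X) : B (x + D x) = x := by
    simpa using congr($(Ring.inverse_mul_cancel _ hunit) x)
  have hB_right (x : X) : B x + D (B x) = x := by
    simpa using congr($(Ring.mul_inverse_cancel _ hunit) x)
  have hGQ'A (x : X) (hx : x ∈ T) : G (Q' (A x)) = x + D x := by
    have hGQA : G (Q (A x)) = x := by rw [← comp_apply G Q, hGQ, hG.apply_apply_of_mem hx]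
    simp [D, hP x hx, hGQA]
  have hBT (y : Y) : B (G (Q' y)) ∈ T := by
    rw [eq_sub_of_add_eq (hB_right (G (Q' y)))]
    exact T.sub_mem (hG.apply_mem _) (hG.apply_mem _)
  set G' := P ∘L (B ∘L (G ∘L Q'))
  have hG' (y : Y) : G' y = B (G (Q' y)) := hP _ (hBT y)
  refine ⟨?_, ?_, ?_⟩
  · refine ContinuousLinearMap.ext fun y => ?_
    change G' (A (G' y)) = G' y
    rw [hG', hG', hGQ'A _ (hBT y), hB_left]
  · refine le_antisymm (LinearMap.range_le_iff_comap.mpr ?_) fun x hx => ⟨A x, ?_⟩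
    · exact eq_top_iff.mpr fun x _ => hPT _
    · rw [coe_coe, hG', hGQ'A x hx, hB_left]
  · ext y
    rw [← hQ', LinearMap.mem_ker, LinearMap.mem_ker, coe_coe, coe_coe, hG']
    refine ⟨fun h => hSQ' y (hG.apply_eq_zero_iff.mp ?_), fun h => by rw [h, map_zero, map_zero]⟩
    rw [← hB_right (G (Q' y)), h, map_zero, add_zero]

end IsOuterInv

theorem IsOuterInv.comp_starProjection_orthogonal {X Y : Type*} [NormedAddCommGroup X]
    [NormedSpace ℂ X] [NormedAddCommGroup Y] [InnerProductSpace ℂ Y] {A : X →L[ℂ] Y}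
    {T : Submodule ℂ X} {S : Submodule ℂ Y} [S.HasOrthogonalProjection] {G : Y →L[ℂ] X}
    (hG : IsOuterInv A T S G) : G ∘L Sᗮ.starProjection = G := by
  ext y
  rw [comp_apply, Submodule.starProjection_orthogonal_val, map_sub,
    hG.apply_eq_zero_iff.mpr (S.starProjection_apply_mem y), sub_zero]

variable {X Y : Type*} [NormedAddCommGroup X] [InnerProductSpace ℂ X] [CompleteSpace X]
  [NormedAddCommGroup Y] [InnerProductSpace ℂ Y] [CompleteSpace Y]
theorem stmt_11 (A : X →L[ℂ] Y) (T : Submodule ℂ X) (S S' : Submodule ℂ Y)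
    (hT : IsClosed (T : Set X)) (hS : IsClosed (S : Set Y)) (hS' : IsClosed (S' : Set Y))
    (G : Y →L[ℂ] X) (hG : IsOuterInv A T S G)
    (hgap : gapHat (S : Set Y) (S' : Set Y) < 1 / (2 + ‖A‖ * ‖G‖)) :
    ∃ G' : Y →L[ℂ] X, IsOuterInv A T S' G' ∧
      G' = projCLM T hT ∘L
        (Ring.inverse (1 + G ∘L
            ((projCLM S'ᗮ (Submodule.isClosed_orthogonal S') -
              projCLM Sᗮ (Submodule.isClosed_orthogonal S)) ∘L (A ∘L projCLM T hT))) ∘L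
          (G ∘L projCLM S'ᗮ (Submodule.isClosed_orthogonal S'))) ∧
      ‖G'‖ ≤ ‖G‖ / (1 - ‖G‖ * ‖A‖ * gapHat (S : Set Y) (S' : Set Y)) := by
  have := hT.completeSpace_coe
  have := hS.completeSpace_coe
  have := hS'.completeSpace_coe
  simp only [projCLM_eq_starProjection]
  set δ := gapHat (S : Set Y) S'
  have hδ : 0 ≤ δ := le_max_of_le_left (gapDelta_nonneg _ _)
  have hδAG : δ * (2 + ‖A‖ * ‖G‖) < 1 := (lt_div_iff₀ (by positivity)).mp (by simpa using hgap)
  have hGAδ : ‖G‖ * ‖A‖ * δ < 1 := by nlinarith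
  have hSS' : gapDelta (S : Set Y) S' < 1 :=
    (le_max_left _ (gapDelta (S' : Set Y) S)).trans_lt
      (show δ < 1 by nlinarith [mul_nonneg (norm_nonneg A) (norm_nonneg G)])
  have hQ : ‖S'ᗮ.starProjection - Sᗮ.starProjection‖ ≤ δ := by
    rw [Submodule.starProjection_orthogonal', Submodule.starProjection_orthogonal',
      sub_sub_sub_cancel_left]
    exact norm_starProjection_sub_le_gapHat
  have hPT : ‖T.starProjection‖ ≤ 1 := T.starProjection_norm_le
  have hD : ‖G ∘L ((S'ᗮ.starProjection - Sᗮ.starProjection) ∘L (A ∘L T.starProjection))‖ < 1 :=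
    (norm_comp_sub_comp_le hPT hQ).trans_lt hGAδ
  refine ⟨_, hG.perturb_kernel T.starProjection_apply_mem
    (fun x hx => Submodule.starProjection_eq_self_iff.mpr hx) hG.comp_starProjection_orthogonal
    ?_ (fun y hy => eq_zero_of_gapDelta_lt_one hSS' hy (S'ᗮ.starProjection_apply_mem y))
    (sub_neg_eq_add (1 : X →L[ℂ] X) _ ▸ isUnit_one_sub_of_norm_lt_one (by rwa [norm_neg])), rfl,
    norm_comp_ringInverse_comp_le hPT S'ᗮ.starProjection_norm_le hQ hGAδ⟩
  ext y
  rw [LinearMap.mem_ker, coe_coe, Submodule.starProjection_apply_eq_zero_iff,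
    Submodule.orthogonal_orthogonal]
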